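/- Let m ≥ 2, Λ > 0, and d ∈ ℝ^m with |d_i| ≤ ε for all i, where ε ≤ Λ/(1 + √(4m−3)). Let M be the symmetric matrix with first row and column equal to d and all other entries zero. Then Λ·I_m − M is positive semidefinite. -/

import Mathlib

set_option maxHeartbeats 1000000 in
/-- If the entries of `d` are bounded by `ε ≤ Λ/(1 + √(4m−3))`, then `Λ·I − M` is
positive semidefinite, where `M` is the arrowhead symmetric matrix built from `d`. -/
theorem stmt5 {m : ℕ} [NeZero m] (hm : 2 ≤ m) (Λ ε : ℝ) (hΛ : 0 < Λ)
    (d : Fin m → ℝ) (hd : ∀ i, |d i| ≤ ε)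
    (hε : ε ≤ Λ / (1 + Real.sqrt (4 * (m : ℝ) - 3)))
    (M : Matrix (Fin m) (Fin m) ℝ)
    (hM : ∀ i j, M i j = if i = 0 then d j else if j = 0 then d i else 0) :
    (Λ • (1 : Matrix (Fin m) (Fin m) ℝ) - M).PosSemidef := by
  have hε0 : 0 ≤ ε := le_trans (abs_nonneg _) (hd 0)
  set s := Real.sqrt (4 * (m : ℝ) - 3) with hs
  have hm3 : (5:ℝ) ≤ 4 * (m:ℝ) - 3 := by
    have : (2:ℝ) ≤ (m:ℝ) := by exact_mod_cast hm
    linarith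
  have hs0 : 0 ≤ s := Real.sqrt_nonneg _
  have hs2 : s ^ 2 = 4 * (m:ℝ) - 3 := Real.sq_sqrt (by linarith)
  have hΛε : ε * (1 + s) ≤ Λ := by
    rw [← le_div_iff₀ (by linarith)]; exact hε
  have hsym : (Λ • (1 : Matrix (Fin m) (Fin m) ℝ) - M).IsHermitian := by
    show Matrix.conjTranspose _ = _
    ext i j
    simp only [Matrix.conjTranspose_apply, Matrix.sub_apply, Matrix.smul_apply,
      Matrix.one_apply, hM, star_trivial, smul_eq_mul]
    rcases eq_or_ne i 0 with hi | hi <;> rcases eq_or_ne j 0 with hj | hj <;>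
      simp [hi, hj, eq_comm]
  refine Matrix.posSemidef_iff_dotProduct_mulVec.mpr ⟨hsym, ?_⟩
  intro x
  have key : ∀ i, (M.mulVec x) i = if i = 0 then ∑ j, d j * x j else d i * x 0 := by
    intro i
    simp only [Matrix.mulVec, dotProduct, hM]
    split_ifs with h
    · rfl
    · simp [h, ite_mul, Finset.sum_ite_eq']
  set a := x 0 with ha
  set B := ∑ i ∈ Finset.univ.erase (0 : Fin m), d i * x i with hB
  set S := ∑ i ∈ Finset.univ.erase (0 : Fin m), x i ^ 2 with hS
  have hSn : 0 ≤ S := Finset.sum_nonneg fun i _ => sq_nonneg _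
  have hqd : dotProduct (star x) ((Λ • (1 : Matrix (Fin m) (Fin m) ℝ) - M).mulVec x)
      = Λ * (a ^ 2 + S) - (d 0 * a ^ 2 + 2 * a * B) := by
    simp only [Matrix.sub_mulVec, Matrix.smul_mulVec, Matrix.one_mulVec,
      dotProduct, Pi.sub_apply, Pi.smul_apply, smul_eq_mul, star_trivial,
      mul_sub, Finset.sum_sub_distrib, key]
    have h1 : ∑ i : Fin m, x i * (Λ * x i) = Λ * (a ^ 2 + S) := by
      rw [← Finset.add_sum_erase _ _ (Finset.mem_univ (0 : Fin m))]
      rw [mul_add]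
      congr 1
      · ring
      · rw [Finset.mul_sum]; apply Finset.sum_congr rfl; intros; ring
    have h3 : ∑ j, d j * x j = d 0 * a + B := by
      rw [← Finset.add_sum_erase _ _ (Finset.mem_univ (0 : Fin m))]
    have h4 : ∑ i ∈ Finset.univ.erase (0 : Fin m),
        x i * (if i = 0 then ∑ j, d j * x j else d i * x 0) = a * B := by
      rw [Finset.mul_sum]
      apply Finset.sum_congr rfl
      intro i hi
      rw [if_neg (Finset.mem_erase.mp hi).1]
      ring
    have h2 : ∑ i : Fin m, x i * (if i = 0 then ∑ j, d j * x j else d i * x 0)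
        = d 0 * a ^ 2 + 2 * a * B := by
      rw [← Finset.add_sum_erase _ _ (Finset.mem_univ (0 : Fin m)), h4, if_pos rfl, h3]
      ring
    rw [h1, h2]
  rw [hqd]
  have hcs : B ^ 2 ≤ ((m:ℝ) - 1) * ε ^ 2 * S := by
    have h5 := Finset.sum_mul_sq_le_sq_mul_sq (Finset.univ.erase (0 : Fin m)) d x
    have h6 : ∑ i ∈ Finset.univ.erase (0 : Fin m), d i ^ 2 ≤ ((m:ℝ) - 1) * ε ^ 2 := by
      calc ∑ i ∈ Finset.univ.erase (0 : Fin m), d i ^ 2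
          ≤ ∑ _i ∈ Finset.univ.erase (0 : Fin m), ε ^ 2 := by
            apply Finset.sum_le_sum
            intro i _
            have := hd i
            nlinarith [abs_nonneg (d i), sq_abs (d i)]
        _ = ((m:ℝ) - 1) * ε ^ 2 := by
            rw [Finset.sum_const, Finset.card_erase_of_mem (Finset.mem_univ _),
              Finset.card_univ, Fintype.card_fin]
            have h7 : (1:ℕ) ≤ m := le_trans (by norm_num) hm
            have : ((m - 1 : ℕ) : ℝ) = (m:ℝ) - 1 := by
              push_cast [h7]; ring
            simp [nsmul_eq_mul, this]
    calc B ^ 2 ≤ (∑ i ∈ Finset.univ.erase (0 : Fin m), d i ^ 2) * S := h5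
      _ ≤ ((m:ℝ) - 1) * ε ^ 2 * S := mul_le_mul_of_nonneg_right h6 hSn
  have hd0 : d 0 ≤ ε := le_trans (le_abs_self _) (hd 0)
  have hεΛ : ε ≤ Λ := by nlinarith
  have hkey : ε ^ 2 * ((m:ℝ) - 1) ≤ (Λ - ε) * Λ := by
    have hp : ε * s * (ε * (1 + s)) ≤ (Λ - ε) * Λ :=
      mul_le_mul (by nlinarith) hΛε (by positivity) (by linarith)
    nlinarith [mul_nonneg (mul_nonneg hε0 hε0) hs0]
  have hu : 0 ≤ (Λ - ε) * a ^ 2 := mul_nonneg (by linarith) (sq_nonneg a)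
  have hv : 0 ≤ Λ * S := mul_nonneg hΛ.le hSn
  have hab : a ^ 2 * B ^ 2 ≤ (Λ - ε) * a ^ 2 * (Λ * S) := by
    nlinarith [mul_le_mul_of_nonneg_left hcs (sq_nonneg a),
      mul_le_mul_of_nonneg_left hkey (mul_nonneg (sq_nonneg a) hSn)]
  have main : 0 ≤ (Λ - ε) * a ^ 2 + Λ * S - 2 * a * B := by
    nlinarith [hu, hv, hab, sq_nonneg ((Λ - ε) * a ^ 2 - Λ * S)]
  have hfin : d 0 * a ^ 2 ≤ ε * a ^ 2 := mul_le_mul_of_nonneg_right hd0 (sq_nonneg a)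
  linarith [hfin, main]
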